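/- arXiv:1301.0854 — 2 statements merged into one kernel-verified Lean document; each statement's English description precedes it below -/
import Mathlib

section
/- If a nearest neighbor Z^d shift of finite type X with alphabet A is ε-full with ε < 1/(2d+2), then for every n the number of globally admissible configurations on the cube [1,n]^d exceeds (|A|(1-(d+1)ε))^{n^d}, and consequently h(X) > log|A| + log(1-(d+1)ε). In particular, if ε = (1-e^{-β})/(d+1) then h(X) > log|A| - β. -/
open MeasureTheory

abbrev Site (d : ℕ) := Fin d → ℤ

def unitVec (d : ℕ) (i : Fin d) : Site d := fun j => if j = i then 1 else 0

def adjSites {d : ℕ} (u v : Site d) : Prop :=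
  ∃ i : Fin d, v = u + unitVec d i ∨ u = v + unitVec d i

def innerBd {d : ℕ} (S : Set (Site d)) : Set (Site d) :=
  {v | v ∈ S ∧ ∃ u, u ∉ S ∧ adjSites v u}

def outerBd {d : ℕ} (S : Set (Site d)) : Set (Site d) :=
  {v | v ∉ S ∧ ∃ u, u ∈ S ∧ adjSites v u}

def cube (d n : ℕ) : Set (Site d) := {v | ∀ i, 1 ≤ v i ∧ v i ≤ (n : ℤ)}

def symBox (d n : ℕ) : Set (Site d) := {v | ∀ i, |v i| ≤ (n : ℤ)}

def symBoxR (d : ℕ) (r : ℝ) : Set (Site d) := {v | ∀ i, |((v i : ℤ) : ℝ)| ≤ r}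

/-- A nearest neighbor `ℤ^d` SFT is specified by its allowed adjacent pairs
in each of the `d` cardinal directions: `adj i a b` means the pair `a b` may
appear at sites `v, v + e i`. -/
structure NNSFT (d : ℕ) (A : Type) where
  adj : Fin d → A → A → Prop

namespace NNSFT

variable {d : ℕ} {A : Type}

/-- The points of the subshift. -/
def pts (X : NNSFT d A) : Set (Site d → A) :=
  {x | ∀ (i : Fin d) (v : Site d), X.adj i (x v) (x (v + unitVec d i))}

/-- A configuration on shape `S` is locally admissible if it contains no
forbidden adjacent pair inside `S`. -/
def locAdm (X : NNSFT d A) (S : Set (Site d)) (w : Site d → A) : Prop :=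
  ∀ (i : Fin d) (v : Site d), v ∈ S → v + unitVec d i ∈ S →
    X.adj i (w v) (w (v + unitVec d i))

/-- A configuration on shape `S` is globally admissible if it extends to a
point of the subshift. -/
def globAdm (X : NNSFT d A) (S : Set (Site d)) (w : Site d → A) : Prop :=
  ∃ x ∈ X.pts, ∀ v ∈ S, x v = w v

/-- `X` is `ε`-full with good-letter set `G`. -/
def epsFullWith [Fintype A] (X : NNSFT d A) (ε : ℝ) (G : Set A) : Prop :=
  ((G.ncard : ℝ) > (1 - ε) * Fintype.card A) ∧
  ∀ g ∈ G, ∀ i : Fin d,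
    (({a : A | X.adj i g a}.ncard : ℝ) > (1 - ε) * Fintype.card A) ∧
    (({a : A | X.adj i a g}.ncard : ℝ) > (1 - ε) * Fintype.card A)

/-- `X` is `ε`-full. -/
def epsFull [Fintype A] (X : NNSFT d A) (ε : ℝ) : Prop :=
  ∃ G : Set A, X.epsFullWith ε G

/-- The globally admissible patterns on shape `S`. -/
def langSet (X : NNSFT d A) (S : Set (Site d)) : Set (S → A) :=
  (fun x => S.restrict x) '' X.pts

/-- The number of globally admissible patterns on shape `S`. -/
noncomputable def langCard (X : NNSFT d A) (S : Set (Site d)) : ℕ :=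
  (X.langSet S).ncard

/-- Topological entropy, as the infimum (= limit, by subadditivity) of the
normalized log-counts of globally admissible patterns on cubes. -/
noncomputable def entropy (X : NNSFT d A) : ℝ :=
  ⨅ n : ℕ+, Real.log (X.langCard (cube d (n : ℕ))) / ((n : ℕ) : ℝ) ^ d

end NNSFT

instance confMS (d : ℕ) (A : Type) : MeasurableSpace (Site d → A) :=
  @MeasurableSpace.pi (Site d) (fun _ => A) (fun _ => ⊤)

def shiftMap {d : ℕ} {A : Type} (t : Site d) (x : Site d → A) : Site d → A :=
  fun v => x (v + t)

/-- Shift invariance of a measure on the full shift. -/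
def shiftInv {d : ℕ} {A : Type} (μ : Measure (Site d → A)) : Prop :=
  ∀ t : Site d, Measure.map (shiftMap t) μ = μ

/-- The cylinder set of configurations agreeing with `w` on `S`. -/
def cylEvent {d : ℕ} {A : Type} (S : Set (Site d)) (w : Site d → A) :
    Set (Site d → A) := {x | ∀ v ∈ S, x v = w v}

/-- Shannon entropy of the marginal of `μ` on the cube `[1,n]^d`. -/
noncomputable def blockEnt {d : ℕ} {A : Type} [Fintype A]
    (μ : Measure (Site d → A)) (n : ℕ) : ℝ :=
  ∑ w : (Fin d → Fin n) → A,
    Real.negMulLog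
      ((μ {x | ∀ p : Fin d → Fin n, x (fun i => (p i : ℤ) + 1) = w p}).toReal)

/-- Measure-theoretic entropy, as the infimum (= limit, by subadditivity) of
normalized Shannon entropies of cube marginals. -/
noncomputable def measEnt {d : ℕ} {A : Type} [Fintype A]
    (μ : Measure (Site d → A)) : ℝ :=
  ⨅ n : ℕ+, blockEnt μ (n : ℕ) / ((n : ℕ) : ℝ) ^ d

/-- `μ` is a measure of maximal entropy for `X`. -/
def NNSFT.isMME {d : ℕ} {A : Type} [Fintype A] (X : NNSFT d A)
    (μ : Measure (Site d → A)) : Prop :=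
  IsProbabilityMeasure μ ∧ shiftInv μ ∧ μ X.pts = 1 ∧ measEnt μ = X.entropy

/-- `badConn bad S T x` : in the configuration `x` there is a path of
`bad`-letters from `S` to `T`. -/
def badConn {d : ℕ} {A : Type} (bad : A → Prop) (S T : Set (Site d))
    (x : Site d → A) : Prop :=
  ∃ (L : ℕ) (p : ℕ → Site d), p 0 ∈ S ∧ p L ∈ T ∧
    (∀ j < L, adjSites (p j) (p (j + 1))) ∧ ∀ j ≤ L, bad (x (p j))

/-!
Call a pattern good if it is locally admissible and uses only letters of `G`. A neighbour
carrying a good letter forbids fewer than `ε|A|` letters at a site, and fewer than `ε|A|`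
letters are bad; as `(2d+1)ε < 1`, some letter always fits, so filling `ℤ^d` greedily extends
every good pattern to a point of `X`. Filling the cube `[1,n]^d` in increasing order of
coordinate sum, each new site sees only its `d` backward neighbours and so has more than
`|A|(1-(d+1)ε)` admissible letters; hence there are at least `m^(n^d)` good patterns on the cube,
`m` being the least integer above `|A|(1-(d+1)ε)`, and all of them are globally admissible.
-/

open Function

lemma ncard_compl_lt_of_lt {α : Type*} [Fintype α] {s : Set α} {ε : ℝ}
    (h : (1 - ε) * Fintype.card α < s.ncard) : (sᶜ.ncard : ℝ) < ε * Fintype.card α := by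
  have hsum : (s.ncard : ℝ) + sᶜ.ncard = Fintype.card α := by
    exact_mod_cast (Set.ncard_add_ncard_compl s).trans (Nat.card_eq_fintype_card)
  linarith

lemma ncard_compl_setOf_imp_le {α : Type*} {P : Prop} {Q : α → Prop} {b : ℝ} (hb : 0 ≤ b)
    (h : P → ({a | Q a}ᶜ.ncard : ℝ) ≤ b) : ({a | P → Q a}ᶜ.ncard : ℝ) ≤ b := by
  by_cases hP : P
  · simpa [hP] using h hP
  · simpa [hP] using hb

lemma exists_injective_fin_of_le_ncard {α : Type*} [Finite α] {s : Set α} {m : ℕ}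
    (h : m ≤ s.ncard) : ∃ f : Fin m → α, Injective f ∧ ∀ j, f j ∈ s := by
  classical
  have := Fintype.ofFinite α
  obtain ⟨f⟩ := Function.Embedding.nonempty_of_card_le (α := Fin m) (β := s)
    (by rwa [Fintype.card_fin, ← Nat.card_eq_fintype_card])
  exact ⟨(↑) ∘ f, Subtype.val_injective.comp f.injective, fun j => (f j).2⟩

lemma add_unitVec_ne {d : ℕ} (v : Site d) (i : Fin d) : v + unitVec d i ≠ v := by
  intro h
  have := congrFun h i
  simp [unitVec] at this

lemma sum_add_unitVec {d : ℕ} (v : Site d) (i : Fin d) :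
    ∑ j, (v + unitVec d i) j = ∑ j, v j + 1 := by
  simp [unitVec, Finset.sum_add_distrib]

lemma coe_Icc_eq_cube (d n : ℕ) :
    ((Finset.Icc 1 fun _ => (n : ℤ) : Finset (Site d)) : Set (Site d)) = cube d n := by
  ext v
  simp [cube, Pi.le_def, forall_and]

lemma card_Icc_cube (d n : ℕ) :
    (Finset.Icc 1 fun _ => (n : ℤ) : Finset (Site d)).card = n ^ d := by
  simp [Pi.card_Icc]

namespace NNSFT

variable {d : ℕ} {A : Type}

def IsGoodOn (X : NNSFT d A) (G : Set A) (S : Set (Site d)) (x : Site d → A) : Prop :=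
  (∀ v ∈ S, x v ∈ G) ∧ X.locAdm S x

def fillers (X : NNSFT d A) (G : Set A) (S : Set (Site d)) (x : Site d → A) (v : Site d) :
    Set A :=
  G ∩ (⋂ i, {a | v + unitVec d i ∈ S → X.adj i a (x (v + unitVec d i))}) ∩
    ⋂ i, {a | v - unitVec d i ∈ S → X.adj i (x (v - unitVec d i)) a}

variable {X : NNSFT d A} {G : Set A}

lemma isGoodOn_update {S : Set (Site d)} {x : Site d → A} {v : Site d} {a : A}
    (hx : X.IsGoodOn G S x) (ha : a ∈ X.fillers G S x v) :
    X.IsGoodOn G (insert v S) (update x v a) := by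
  obtain ⟨⟨haG, hfwd⟩, hbwd⟩ := ha
  rw [Set.mem_iInter] at hfwd hbwd
  constructor
  · intro u hu
    rcases eq_or_ne u v with rfl | huv
    · rwa [update_self]
    · rw [update_of_ne huv]
      exact hx.1 u (hu.resolve_left huv)
  · intro i u hu hu'
    rcases eq_or_ne u v with rfl | huv
    · have hne := add_unitVec_ne u i
      rw [update_self, update_of_ne hne]
      exact hfwd i (hu'.resolve_left hne)
    rcases eq_or_ne (u + unitVec d i) v with hv | hv
    · have hu_eq : v - unitVec d i = u := by rw [← hv, add_sub_cancel_right]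
      rw [update_of_ne huv, hv, update_self]
      have := hbwd i (hu_eq ▸ hu.resolve_left huv)
      rwa [hu_eq] at this
    · rw [update_of_ne huv, update_of_ne hv]
      exact hx.2 i u (hu.resolve_left huv) (hu'.resolve_left hv)

lemma exists_isGoodOn_insert_eqOn {S : Set (Site d)} {x : Site d → A} {v : Site d}
    (hx : X.IsGoodOn G S x) (hfill : (X.fillers G S x v).Nonempty) :
    ∃ y, X.IsGoodOn G (insert v S) y ∧ Set.EqOn y x S := by
  by_cases hv : v ∈ S
  · exact ⟨x, by rwa [Set.insert_eq_of_mem hv], Set.eqOn_refl _ _⟩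
  · obtain ⟨a, ha⟩ := hfill
    exact ⟨update x v a, isGoodOn_update hx ha,
      fun u hu => update_of_ne (ne_of_mem_of_not_mem hu hv) _ _⟩

theorem exists_mem_pts_eqOn
    (hfill : ∀ S x v, X.IsGoodOn G S x → (X.fillers G S x v).Nonempty)
    {S : Set (Site d)} {w : Site d → A} (hw : X.IsGoodOn G S w) :
    ∃ x ∈ X.pts, Set.EqOn x w S := by
  have : Nonempty A := ⟨w 0⟩
  obtain ⟨e, he⟩ := exists_surjective_nat (Site d)
  choose n hn using he
  choose! next hnext heqOn using
    fun (p : Set (Site d) × (Site d → A)) (hp : X.IsGoodOn G p.1 p.2) v =>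
      exists_isGoodOn_insert_eqOn (v := v) hp (hfill _ _ v hp)
  let seq : ℕ → Set (Site d) × (Site d → A) :=
    fun k => Nat.rec (S, w) (fun k p => (insert (e k) p.1, next p (e k))) k
  have hgood : ∀ k, X.IsGoodOn G (seq k).1 (seq k).2 := by
    intro k
    induction k with
    | zero => exact hw
    | succ k ih => exact hnext _ ih _
  have hmono : ∀ j k, j ≤ k →
      (seq j).1 ⊆ (seq k).1 ∧ Set.EqOn (seq k).2 (seq j).2 (seq j).1 := by
    intro j k hjk
    induction hjk with
    | refl => exact ⟨subset_rfl, Set.eqOn_refl _ _⟩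
    | step _ ih =>
      exact ⟨ih.1.trans (Set.subset_insert _ _),
        ((heqOn _ (hgood _) _).mono ih.1).trans ih.2⟩
  have hsettled : ∀ u k, n u < k → u ∈ (seq k).1 ∧ (seq k).2 u = (seq (n u + 1)).2 u := by
    intro u k hk
    have hu : u ∈ (seq (n u + 1)).1 := by
      change u ∈ insert (e (n u)) _
      rw [hn u]
      exact Set.mem_insert _ _
    exact ⟨(hmono _ _ hk).1 hu, (hmono _ _ hk).2 hu⟩
  refine ⟨fun v => (seq (n v + 1)).2 v, fun i v => ?_, fun v hv => ?_⟩
  · obtain ⟨K, hvK, hvK'⟩ : ∃ K, n v < K ∧ n (v + unitVec d i) < K :=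
      ⟨max (n v) (n (v + unitVec d i)) + 1, by omega, by omega⟩
    obtain ⟨hv, hxv⟩ := hsettled _ _ hvK
    obtain ⟨hv', hxv'⟩ := hsettled _ _ hvK'
    beta_reduce
    rw [← hxv, ← hxv']
    exact (hgood K).2 i v hv hv'
  · exact (hmono 0 (n v + 1) (Nat.zero_le _)).2 hv

variable (X G) in
/-- Good patterns on `S`, encoded as configurations equal to the letter `a₀` off `S`. -/
def goodPatterns (a₀ : A) (S : Set (Site d)) : Set (Site d → A) :=
  {x | X.IsGoodOn G S x ∧ ∀ u ∉ S, x u = a₀}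

lemma eq_of_mem_goodPatterns_of_eqOn {a₀ : A} {S : Set (Site d)} {x y : Site d → A}
    (hx : x ∈ X.goodPatterns G a₀ S) (hy : y ∈ X.goodPatterns G a₀ S) (h : Set.EqOn x y S) :
    x = y := by
  funext u
  by_cases hu : u ∈ S
  · exact h hu
  · rw [hx.2 u hu, hy.2 u hu]

lemma goodPatterns_finite [Finite A] (a₀ : A) {S : Set (Site d)} (hS : S.Finite) :
    (X.goodPatterns G a₀ S).Finite := by
  have := hS.to_subtype
  refine Set.Finite.of_finite_image (f := S.domRestrict) (Set.toFinite _) fun x hx y hy h => ?_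
  exact eq_of_mem_goodPatterns_of_eqOn hx hy (Set.domRestrict_eq_domRestrict_iff.1 h)

lemma ncard_goodPatterns_mul_le_insert [Finite A] {a₀ : A} {S : Set (Site d)} {v : Site d}
    {m : ℕ} (hS : S.Finite) (hv : v ∉ S)
    (hm : ∀ x, X.IsGoodOn G S x → m ≤ (X.fillers G S x v).ncard) :
    (X.goodPatterns G a₀ S).ncard * m ≤ (X.goodPatterns G a₀ (insert v S)).ncard := by
  have : Nonempty A := ⟨a₀⟩
  choose! f hfinj hfmem using fun x (hx : X.IsGoodOn G S x) =>
    exists_injective_fin_of_le_ncard (hm x hx)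
  have hcard : (X.goodPatterns G a₀ S ×ˢ (Set.univ : Set (Fin m))).ncard =
      (X.goodPatterns G a₀ S).ncard * m := by
    rw [Set.ncard_prod, Set.ncard_univ, Nat.card_eq_fintype_card, Fintype.card_fin]
  rw [← hcard]
  refine Set.ncard_le_ncard_of_injOn (fun p => update p.1 v (f p.1 p.2)) ?_ ?_
    (goodPatterns_finite a₀ (hS.insert v))
  · rintro ⟨x, j⟩ ⟨hx, -⟩
    refine ⟨isGoodOn_update hx.1 (hfmem x hx.1 j), fun u hu => ?_⟩
    rw [Set.mem_insert_iff, not_or] at hu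
    rw [update_of_ne hu.1]
    exact hx.2 u hu.2
  · rintro ⟨x, j⟩ ⟨hx, -⟩ ⟨y, k⟩ ⟨hy, -⟩ h
    have hxy : x = y := by
      refine eq_of_mem_goodPatterns_of_eqOn hx hy fun u hu => ?_
      simpa [update_of_ne (ne_of_mem_of_not_mem hu hv)] using congrFun h u
    subst hxy
    have hjk := congrFun h v
    simp only [update_self] at hjk
    rw [hfinj x hx.1 hjk]

theorem pow_card_le_ncard_goodPatterns [Finite A] (a₀ : A) {m : ℕ}
    (hm : ∀ S x v, X.IsGoodOn G S x → (∀ i, v + unitVec d i ∉ S) →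
      m ≤ (X.fillers G S x v).ncard)
    (T : Finset (Site d)) : m ^ T.card ≤ (X.goodPatterns G a₀ T).ncard := by
  classical
  induction T using Finset.induction_on_max_value (fun v : Site d => ∑ i, v i) with
  | empty =>
    have hconst : (fun _ => a₀) ∈ X.goodPatterns G a₀ ((∅ : Finset (Site d)) : Set (Site d)) :=
      ⟨⟨by simp, by simp [locAdm]⟩, fun _ _ => rfl⟩
    rw [Finset.card_empty, pow_zero, Nat.one_le_iff_ne_zero]
    exact Set.ncard_ne_zero_of_mem hconst (goodPatterns_finite a₀ (Finset.finite_toSet _))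
  | insert v T hv hmax ih =>
    rw [Finset.card_insert_of_notMem hv, pow_succ, Finset.coe_insert]
    refine (Nat.mul_le_mul_right m ih).trans (ncard_goodPatterns_mul_le_insert
      (Finset.finite_toSet T) hv fun x hx => hm _ x v hx fun i hi => ?_)
    have := hmax _ hi
    rw [sum_add_unitVec] at this
    omega

lemma ncard_goodPatterns_le_langCard [Finite A] (a₀ : A) {S : Set (Site d)} (hS : S.Finite)
    (hext : ∀ x, X.IsGoodOn G S x → ∃ y ∈ X.pts, Set.EqOn y x S) :
    (X.goodPatterns G a₀ S).ncard ≤ X.langCard S := by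
  have := hS.to_subtype
  refine Set.ncard_le_ncard_of_injOn S.domRestrict (fun x hx => ?_) (fun x hx y hy h => ?_)
    (Set.toFinite _)
  · obtain ⟨y, hy, hyx⟩ := hext x hx.1
    exact ⟨y, hy, funext fun u => hyx u.2⟩
  · exact eq_of_mem_goodPatterns_of_eqOn hx hy (Set.domRestrict_eq_domRestrict_iff.1 h)

theorem log_le_entropy (X : NNSFT d A) {b : ℝ} (hb : 0 < b)
    (h : ∀ n : ℕ, 1 ≤ n → b ^ (n ^ d) ≤ X.langCard (cube d n)) : Real.log b ≤ X.entropy := by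
  refine le_ciInf fun n => ?_
  rw [le_div_iff₀ (by positivity), mul_comm]
  calc ((n : ℕ) : ℝ) ^ d * Real.log b = Real.log (b ^ ((n : ℕ) ^ d)) := by
        rw [Real.log_pow]; push_cast; ring
    _ ≤ _ := Real.log_le_log (by positivity) (h n (PNat.pos n))

lemma ncard_compl_fillers_le [Finite A] (X : NNSFT d A) (G : Set A) (S : Set (Site d))
    (x : Site d → A) (v : Site d) :
    (X.fillers G S x v)ᶜ.ncard ≤ Gᶜ.ncard +
      ∑ i, {a | v + unitVec d i ∈ S → X.adj i a (x (v + unitVec d i))}ᶜ.ncard +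
      ∑ i, {a | v - unitVec d i ∈ S → X.adj i (x (v - unitVec d i)) a}ᶜ.ncard := by
  simp only [fillers, Set.compl_inter, Set.compl_iInter]
  exact (Set.ncard_union_le _ _).trans (add_le_add ((Set.ncard_union_le _ _).trans
    (Nat.add_le_add_left (Set.ncard_iUnion_le_of_fintype _) _)) (Set.ncard_iUnion_le_of_fintype _))

namespace epsFullWith

variable [Fintype A] {ε : ℝ}

lemma eps_mul_card_pos (hfull : X.epsFullWith ε G) : 0 < ε * Fintype.card A := by
  have hG : (G.ncard : ℝ) ≤ Fintype.card A := by
    exact_mod_cast (Set.ncard_le_card G).trans_eq Nat.card_eq_fintype_card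
  linarith [hfull.1]

lemma eps_pos (hfull : X.epsFullWith ε G) : 0 < ε :=
  pos_of_mul_pos_left hfull.eps_mul_card_pos (Nat.cast_nonneg _)

lemma card_pos (hfull : X.epsFullWith ε G) : (0 : ℝ) < Fintype.card A :=
  (Nat.cast_nonneg _).lt_of_ne fun h => by simpa [← h] using hfull.eps_mul_card_pos

lemma ncard_compl_fillers_lt (hfull : X.epsFullWith ε G) {S : Set (Site d)} {x : Site d → A}
    (hx : ∀ u ∈ S, x u ∈ G) (v : Site d) :
    ((X.fillers G S x v)ᶜ.ncard : ℝ) < (d + 1) * (ε * Fintype.card A) +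
      ∑ i, ({a | v + unitVec d i ∈ S → X.adj i a (x (v + unitVec d i))}ᶜ.ncard : ℝ) := by
  have hbackward : ∀ i, ({a | v - unitVec d i ∈ S → X.adj i (x (v - unitVec d i)) a}ᶜ.ncard : ℝ)
      ≤ ε * Fintype.card A := fun i =>
    ncard_compl_setOf_imp_le hfull.eps_mul_card_pos.le fun h =>
      (ncard_compl_lt_of_lt (hfull.2 _ (hx _ h) i).1).le
  calc ((X.fillers G S x v)ᶜ.ncard : ℝ)
      ≤ Gᶜ.ncard + ∑ i, ({a | v + unitVec d i ∈ S → X.adj i a (x (v + unitVec d i))}ᶜ.ncard : ℝ)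
        + ∑ i, ({a | v - unitVec d i ∈ S → X.adj i (x (v - unitVec d i)) a}ᶜ.ncard : ℝ) := by
        exact_mod_cast ncard_compl_fillers_le X G S x v
    _ < ε * Fintype.card A
        + ∑ i, ({a | v + unitVec d i ∈ S → X.adj i a (x (v + unitVec d i))}ᶜ.ncard : ℝ)
        + ∑ _i : Fin d, ε * Fintype.card A := by
        exact add_lt_add_of_lt_of_le (add_lt_add_left (ncard_compl_lt_of_lt hfull.1) _)
          (Finset.sum_le_sum fun i _ => hbackward i)
    _ = _ := by simp; ring

lemma fillers_nonempty (hfull : X.epsFullWith ε G) (hε : (2 * d + 1) * ε < 1)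
    {S : Set (Site d)} {x : Site d → A} (hx : ∀ u ∈ S, x u ∈ G) (v : Site d) :
    (X.fillers G S x v).Nonempty := by
  have hforward : ∀ i, ({a | v + unitVec d i ∈ S → X.adj i a (x (v + unitVec d i))}ᶜ.ncard : ℝ)
      ≤ ε * Fintype.card A := fun i =>
    ncard_compl_setOf_imp_le hfull.eps_mul_card_pos.le fun h =>
      (ncard_compl_lt_of_lt (hfull.2 _ (hx _ h) i).2).le
  have hforward_sum : ∑ i, ({a | v + unitVec d i ∈ S → X.adj i a (x (v + unitVec d i))}ᶜ.ncard : ℝ)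
      ≤ d * (ε * Fintype.card A) :=
    (Finset.sum_le_sum fun i _ => hforward i).trans_eq (by simp)
  have hbound : ((X.fillers G S x v)ᶜ.ncard : ℝ) < Fintype.card A :=
    calc ((X.fillers G S x v)ᶜ.ncard : ℝ)
        < (d + 1) * (ε * Fintype.card A) + d * (ε * Fintype.card A) :=
          (hfull.ncard_compl_fillers_lt hx v).trans_le (add_le_add_right hforward_sum _)
      _ = (2 * d + 1) * ε * Fintype.card A := by ring
      _ < Fintype.card A := by nlinarith [hfull.card_pos]
  refine Set.nonempty_iff_ne_empty.2 fun hempty => hbound.ne ?_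
  rw [hempty, Set.compl_empty, Set.ncard_univ, Nat.card_eq_fintype_card]

lemma card_mul_lt_ncard_fillers (hfull : X.epsFullWith ε G) {S : Set (Site d)}
    {x : Site d → A} (hx : ∀ u ∈ S, x u ∈ G) {v : Site d} (hv : ∀ i, v + unitVec d i ∉ S) :
    Fintype.card A * (1 - (d + 1) * ε) < (X.fillers G S x v).ncard := by
  have hbound := hfull.ncard_compl_fillers_lt hx v
  simp only [hv, false_imp_iff, Set.ofPred_true, Set.compl_univ, Set.ncard_empty, Nat.cast_zero,
    Finset.sum_const_zero, add_zero] at hbound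
  have hsum : ((X.fillers G S x v).ncard : ℝ) + (X.fillers G S x v)ᶜ.ncard = Fintype.card A := by
    exact_mod_cast (Set.ncard_add_ncard_compl _).trans Nat.card_eq_fintype_card
  linarith

theorem exists_lt_pow_le_langCard (hfull : X.epsFullWith ε G) (hε : (2 * d + 1) * ε < 1) :
    ∃ m : ℕ, Fintype.card A * (1 - (d + 1) * ε) < m ∧
      ∀ n, m ^ (n ^ d) ≤ X.langCard (cube d n) := by
  have hc : 0 ≤ Fintype.card A * (1 - (d + 1) * ε) :=
    mul_nonneg (Nat.cast_nonneg _) (by nlinarith [hfull.eps_pos])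
  refine ⟨⌊Fintype.card A * (1 - (d + 1) * ε)⌋₊ + 1, by exact_mod_cast Nat.lt_floor_add_one _,
    fun n => ?_⟩
  obtain ⟨a₀⟩ : Nonempty A := Fintype.card_pos_iff.1 (by exact_mod_cast hfull.card_pos)
  rw [← coe_Icc_eq_cube, ← card_Icc_cube d n]
  refine (pow_card_le_ncard_goodPatterns a₀ (fun S x v hx hv => ?_) _).trans
    (ncard_goodPatterns_le_langCard a₀ (Finset.finite_toSet _) fun x hx =>
      exists_mem_pts_eqOn (fun S x v hx => hfull.fillers_nonempty hε hx.1 v) hx)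
  exact (Nat.floor_lt hc).2 (hfull.card_mul_lt_ncard_fillers hx.1 hv)

end epsFullWith

end NNSFT

theorem epsFull_entropy_gt_general {d : ℕ} {A : Type} [Fintype A] (X : NNSFT d A)
    (ε : ℝ) (G : Set A)
    (hfull : X.epsFullWith ε G) (hεsmall : ε < 1 / (2 * d + 2)) :
    (∀ n : ℕ, 1 ≤ n →
      (X.langCard (cube d n) : ℝ) >
        ((Fintype.card A : ℝ) * (1 - (d + 1) * ε)) ^ (n ^ d)) ∧
    X.entropy > Real.log (Fintype.card A) + Real.log (1 - (d + 1) * ε) ∧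
    (∀ β : ℝ, 0 < β → ε = (1 - Real.exp (-β)) / (d + 1) →
      X.entropy > Real.log (Fintype.card A) - β) := by
  have hε : ε * (2 * d + 2) < 1 := by rwa [lt_div_iff₀ (by positivity)] at hεsmall
  have hε₀ := hfull.eps_pos
  have hc : 0 < (Fintype.card A : ℝ) * (1 - (d + 1) * ε) := mul_pos hfull.card_pos (by linarith)
  obtain ⟨m, hcm, hcount⟩ := hfull.exists_lt_pow_le_langCard (by linarith)
  have hcount' : ∀ n, (m : ℝ) ^ (n ^ d) ≤ X.langCard (cube d n) := fun n => by
    exact_mod_cast hcount n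
  have hlog : Real.log (Fintype.card A) + Real.log (1 - (d + 1) * ε) < X.entropy := by
    rw [← Real.log_mul hfull.card_pos.ne' (by linarith)]
    exact (Real.log_lt_log hc hcm).trans_le
      (X.log_le_entropy (hc.trans hcm) fun n _ => hcount' n)
  refine ⟨fun n hn => (pow_lt_pow_left₀ hcm hc.le (pow_ne_zero _ (by omega))).trans_le
    (hcount' n), hlog, fun β _ hβ => ?_⟩
  rwa [hβ, mul_div_cancel₀ _ (by positivity), sub_sub_cancel, Real.log_exp, ← sub_eq_add_neg]
    at hlog

theorem epsFull_entropy_gt {d : ℕ} {A : Type} [Fintype A] (X : NNSFT d A)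
    (hd : 0 < d) (hX : X.pts.Nonempty) (ε : ℝ) (hε : 0 < ε) (G : Set A)
    (hfull : X.epsFullWith ε G) (hεsmall : ε < 1 / (2 * d + 2)) :
    (∀ n : ℕ, 1 ≤ n →
      (X.langCard (cube d n) : ℝ) >
        ((Fintype.card A : ℝ) * (1 - (d + 1) * ε)) ^ (n ^ d)) ∧
    X.entropy > Real.log (Fintype.card A) + Real.log (1 - (d + 1) * ε) ∧
    (∀ β : ℝ, 0 < β → ε = (1 - Real.exp (-β)) / (d + 1) →
      X.entropy > Real.log (Fintype.card A) - β) :=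
  epsFull_entropy_gt_general X ε G hfull hεsmall
end

section
/- Let X be a nearest neighbor Z^d SFT such that every locally admissible configuration whose inner boundary consists only of good letters is globally admissible (as holds for ε-full X with ε < 1/(2d+2)). Then for any k and any family of configurations w_t ∈ L_{[1,n]^d}(X) with inner boundary in G, indexed by t ∈ [1,k]^d, the configuration obtained by placing w_t on the translated cube ∏ᵢ[1+(tᵢ-1)(n+1), tᵢ(n+1)-1] for each t is globally admissible; consequently |L_{[1,k(n+1)]^d}(X)| ≥ |L_{[1,n]^d}(X) ∩ ⟨G^Γ⟩|^{k^d} and h(X) ≥ (1/(n+1)^d) log|L_{[1,n]^d}(X) ∩ ⟨G^Γ⟩|. -/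
open MeasureTheory

/-- The number of globally admissible patterns on `[1,n]^d` whose restriction
to the inner boundary consists only of `G`-letters. -/
noncomputable def NGcount {d : ℕ} {A : Type} (X : NNSFT d A) (G : Set A)
    (n : ℕ) : ℕ :=
  {w ∈ X.langSet (cube d n) |
    ∀ v : cube d n, (v : Site d) ∈ innerBd (cube d n) → w v ∈ G}.ncard

/-! The cubes `[1,n]^d + (n+1)t`, `t ∈ [0,k)^d`, are pairwise disjoint and no site of one is
adjacent to a site of another. Hence the configuration agreeing with a translate of `W t` on each
of them is locally admissible, and its inner boundary lies in the union of the inner boundaries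
of the cubes, so it consists of good letters; by hypothesis it is globally admissible. Restricting
points to these blocks thus maps `L_{[1,k(n+1)]^d}(X)` onto a set containing every `k^d`-tuple
of patterns with good boundary. Conversely, cutting `[1,sm]^d` into `s^d` cubes of side `m` gives
`|L_{[1,sm]^d}| ≤ |L_{[1,m]^d}|^(s^d)`. Taking `k = m` and `s = n + 1`, the two bounds compare
`log |L_{[1,m]^d}| / m^d` with `log N_G(n) / (n+1)^d` for every `m`, and the entropy is the
infimum of the former. -/

open Set Function Pointwise

section Geometry

variable {d : ℕ}

lemma abs_sub_le_one_of_adjSites {u v : Site d} (h : adjSites u v) (j : Fin d) :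
    |u j - v j| ≤ 1 := by
  obtain ⟨i, rfl | rfl⟩ := h <;>
  · simp only [Pi.add_apply, unitVec]
    split_ifs <;> norm_num

lemma adjSites_vadd {u v : Site d} (c : Site d) (h : adjSites u v) :
    adjSites (c +ᵥ u) (c +ᵥ v) := by
  obtain ⟨i, rfl | rfl⟩ := h
  · exact ⟨i, Or.inl (add_assoc c u _).symm⟩
  · exact ⟨i, Or.inr (add_assoc c v _).symm⟩

lemma mem_innerBd_of_subset {S T : Set (Site d)} (hST : S ⊆ T) {v : Site d}
    (hv : v ∈ innerBd T) (hvS : v ∈ S) : v ∈ innerBd S :=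
  let ⟨_, u, huT, huv⟩ := hv
  ⟨hvS, u, fun huS => huT (hST huS), huv⟩

lemma neg_vadd_mem_innerBd {S : Set (Site d)} {c v : Site d} (hv : v ∈ innerBd (c +ᵥ S)) :
    -c +ᵥ v ∈ innerBd S := by
  obtain ⟨hvS, u, huS, huv⟩ := hv
  refine ⟨mem_vadd_set_iff_neg_vadd_mem.1 hvS, -c +ᵥ u, fun hu => huS ?_, adjSites_vadd _ huv⟩
  exact mem_vadd_set_iff_neg_vadd_mem.2 hu

lemma cube_finite (d n : ℕ) : (cube d n).Finite :=
  Set.Finite.pi' fun _ => Set.finite_Icc (1 : ℤ) n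

end Geometry

section Tiling

variable {d : ℕ}

def tileOffset {k : ℕ} (p : ℕ) (t : Fin d → Fin k) : Site d := fun i => (t i : ℤ) * p

lemma mem_vadd_cube_iff {n : ℕ} {c u : Site d} :
    u ∈ c +ᵥ cube d n ↔ ∀ i, u i - c i ∈ Icc 1 (n : ℤ) := by
  rw [mem_vadd_set_iff_neg_vadd_mem, vadd_eq_add, neg_add_eq_sub]
  rfl

lemma Int.eq_of_sub_mul_mem_Icc {n : ℕ} {a b x y : ℤ} (hx : x - a * (n + 1) ∈ Icc 1 (n : ℤ))
    (hy : y - b * (n + 1) ∈ Icc 1 (n : ℤ)) (hxy : |x - y| ≤ 1) : a = b := by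
  rw [mem_Icc] at hx hy
  rw [abs_le] at hxy
  have hn : (0 : ℤ) ≤ n + 1 := by positivity
  rcases lt_trichotomy a b with h | h | h
  · nlinarith [mul_le_mul_of_nonneg_right (Int.add_one_le_iff.2 h) hn]
  · exact h
  · nlinarith [mul_le_mul_of_nonneg_right (Int.add_one_le_iff.2 h) hn]

lemma eq_of_mem_tile {n k : ℕ} {t t' : Fin d → Fin k} {u v : Site d}
    (hu : u ∈ tileOffset (n + 1) t +ᵥ cube d n) (hv : v ∈ tileOffset (n + 1) t' +ᵥ cube d n)
    (huv : ∀ j, |u j - v j| ≤ 1) : t = t' := by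
  rw [mem_vadd_cube_iff] at hu hv
  funext j
  have := Int.eq_of_sub_mul_mem_Icc (by exact_mod_cast hu j) (by exact_mod_cast hv j) (huv j)
  exact Fin.ext (by exact_mod_cast this)

lemma pairwise_disjoint_tiles (n k : ℕ) :
    Pairwise (Disjoint on fun t : Fin d → Fin k => tileOffset (n + 1) t +ᵥ cube d n) :=
  fun _ _ hne => Set.disjoint_left.2 fun _ hu hu' =>
    hne (eq_of_mem_tile hu hu' fun _ => by simp)

lemma pairwise_nonadjacent_tiles (n k : ℕ) :
    Pairwise fun t t' : Fin d → Fin k => ∀ u ∈ tileOffset (n + 1) t +ᵥ cube d n,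
      ∀ v ∈ tileOffset (n + 1) t' +ᵥ cube d n, ¬adjSites u v :=
  fun _ _ hne _ hu _ hv huv => hne (eq_of_mem_tile hu hv (abs_sub_le_one_of_adjSites huv))

lemma add_tileOffset_mem_cube {n k p : ℕ} (hnp : n ≤ p) (t : Fin d → Fin k) {v : Site d}
    (hv : v ∈ cube d n) : v + tileOffset p t ∈ cube d (k * p) := by
  intro i
  have hti : (t i : ℤ) + 1 ≤ k := by exact_mod_cast (t i).isLt
  have := mul_le_mul_of_nonneg_right hti (Int.natCast_nonneg p)
  simp only [Pi.add_apply, tileOffset, Nat.cast_mul]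
  constructor <;> nlinarith [hv i, Int.natCast_nonneg (t i : ℕ), Int.natCast_nonneg p,
    (by exact_mod_cast hnp : (n : ℤ) ≤ p)]

lemma exists_fin_sub_mul_mem_Icc {m s : ℕ} {x : ℤ} (hx : x ∈ Icc 1 ((s * m : ℕ) : ℤ)) :
    ∃ q : Fin s, x - q * m ∈ Icc 1 (m : ℤ) := by
  rw [mem_Icc] at hx
  obtain ⟨y, rfl⟩ : ∃ y : ℕ, x = y + 1 := ⟨(x - 1).toNat, by omega⟩
  have hy : y < s * m := by omega
  have hm : 0 < m := Nat.pos_of_ne_zero (by rintro rfl; simp at hy)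
  refine ⟨⟨y / m, Nat.div_lt_of_lt_mul (by linarith)⟩, ?_⟩
  have hdiv : (y : ℤ) = (y / m : ℕ) * m + (y % m : ℕ) := by
    exact_mod_cast (Nat.div_add_mod' y m).symm
  have hmod : ((y % m : ℕ) : ℤ) < m := by exact_mod_cast Nat.mod_lt y hm
  simp only [mem_Icc]
  constructor <;> linarith

lemma exists_eq_add_tileOffset {m s : ℕ} {u : Site d} (hu : u ∈ cube d (s * m)) :
    ∃ t : Fin d → Fin s, ∃ v ∈ cube d m, u = v + tileOffset m t := by
  choose t ht using fun i => exists_fin_sub_mul_mem_Icc (hu i)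
  exact ⟨t, u - tileOffset m t, ht, (sub_add_cancel u _).symm⟩

def blockRestrict {A : Type} {n k p : ℕ} (hnp : n ≤ p) (w : cube d (k * p) → A)
    (t : Fin d → Fin k) (v : cube d n) : A :=
  w ⟨v + tileOffset p t, add_tileOffset_mem_cube hnp t v.2⟩

lemma blockRestrict_injective {A : Type} {m s : ℕ} :
    Injective (blockRestrict (d := d) (A := A) (k := s) (le_refl m)) := by
  intro w w' h
  funext ⟨u, hu⟩
  obtain ⟨t, v, hv, rfl⟩ := exists_eq_add_tileOffset hu
  exact congrFun (congrFun h t) ⟨v, hv⟩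

end Tiling

lemma Set.ncard_univ_pi {ι : Type*} [Fintype ι] {β : ι → Type*} (t : ∀ i, Set (β i)) :
    (univ.pi t).ncard = ∏ i, (t i).ncard := by
  rw [← Nat.card_coe_set_eq, Nat.card_congr (Equiv.Set.univPi t), Nat.card_pi]
  simp only [Nat.card_coe_set_eq]

lemma Set.ncard_univ_pi_const_fin {β : Type*} (d k : ℕ) (s : Set β) :
    (univ.pi fun _ : Fin d → Fin k => s).ncard = s.ncard ^ k ^ d := by
  rw [Set.ncard_univ_pi, Finset.prod_const, Finset.card_univ, Fintype.card_fun,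
    Fintype.card_fin, Fintype.card_fin]

lemma Real.log_div_le_log_div_of_pow_le {a b p q : ℕ} (hp : 0 < p) (hq : 0 < q)
    (h : a ^ p ≤ b ^ q) : Real.log a / q ≤ Real.log b / p := by
  rcases Nat.eq_zero_or_pos a with rfl | ha
  · simpa using div_nonneg (Real.log_natCast_nonneg b) (Nat.cast_nonneg p)
  have hcast : (a : ℝ) ^ p ≤ (b : ℝ) ^ q := by exact_mod_cast h
  have hlog := Real.log_le_log (by positivity) hcast
  rw [Real.log_pow, Real.log_pow] at hlog
  rw [div_le_div_iff₀ (by positivity) (by positivity)]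
  linarith

namespace NNSFT

variable {d : ℕ} {A : Type} (X : NNSFT d A)

def GoodBoundaryExtends (G : Set A) : Prop :=
  ∀ (S : Set (Site d)) (w : Site d → A), S.Finite → X.locAdm S w →
    (∀ v ∈ innerBd S, w v ∈ G) → X.globAdm S w

variable {X}

lemma add_mem_pts {x : Site d → A} (hx : x ∈ X.pts) (c : Site d) :
    (fun v => x (v + c)) ∈ X.pts := fun i v => by
  simpa only [add_right_comm v c] using hx i (v + c)

lemma globAdm.locAdm {S : Set (Site d)} {w : Site d → A} (h : X.globAdm S w) :
    X.locAdm S w := by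
  obtain ⟨x, hx, hxw⟩ := h
  intro i v hv hv'
  rw [← hxw v hv, ← hxw _ hv']
  exact hx i v

lemma locAdm.vadd {S : Set (Site d)} {w : Site d → A} (h : X.locAdm S w) (c : Site d) :
    X.locAdm (c +ᵥ S) (fun v => w (-c +ᵥ v)) := by
  intro i v hv hv'
  have hv' : -c + v + unitVec d i ∈ S :=
    add_assoc (-c) v _ ▸ mem_vadd_set_iff_neg_vadd_mem.1 hv'
  show X.adj i (w (-c + v)) (w (-c + (v + unitVec d i)))
  rw [← add_assoc]
  exact h i _ (mem_vadd_set_iff_neg_vadd_mem.1 hv) hv'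

lemma finite_langSet [Finite A] {S : Set (Site d)} (hS : S.Finite) : (X.langSet S).Finite :=
  have := hS.to_subtype
  Set.toFinite _

section Glue

variable {ι : Type*} [Nonempty ι] (S : ι → Set (Site d)) (w : ι → Site d → A)

noncomputable def glue : Site d → A :=
  fun v => w (Classical.epsilon fun t => v ∈ S t) v

variable {S w}

lemma glue_eq (hdisj : Pairwise (Disjoint on S)) {t : ι} {v : Site d} (hv : v ∈ S t) :
    glue S w v = w t v := by
  have hε := Classical.epsilon_spec (p := fun t => v ∈ S t) ⟨t, hv⟩
  suffices (Classical.epsilon fun t => v ∈ S t) = t by rw [glue, this]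
  by_contra hne
  exact Set.disjoint_left.1 (hdisj hne) hε hv

lemma locAdm_glue (hdisj : Pairwise (Disjoint on S))
    (hsep : Pairwise fun t t' => ∀ u ∈ S t, ∀ v ∈ S t', ¬adjSites u v)
    (hw : ∀ t, X.locAdm (S t) (w t)) : X.locAdm (⋃ t, S t) (glue S w) := by
  intro i v hv hv'
  obtain ⟨t, hvt⟩ := mem_iUnion.1 hv
  obtain ⟨t', hvt'⟩ := mem_iUnion.1 hv'
  obtain rfl : t = t' := by
    by_contra hne
    exact hsep hne v hvt _ hvt' ⟨i, Or.inl rfl⟩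
  rw [glue_eq hdisj hvt, glue_eq hdisj hvt']
  exact hw t i v hvt hvt'

lemma glue_mem_of_mem_innerBd {G : Set A} (hdisj : Pairwise (Disjoint on S))
    (hwG : ∀ t, ∀ v ∈ innerBd (S t), w t v ∈ G) {v : Site d}
    (hv : v ∈ innerBd (⋃ t, S t)) : glue S w v ∈ G := by
  obtain ⟨t, hvt⟩ := mem_iUnion.1 hv.1
  rw [glue_eq hdisj hvt]
  exact hwG t v (mem_innerBd_of_subset (subset_iUnion S t) hv hvt)

theorem GoodBoundaryExtends.exists_mem_pts_eq_on {G : Set A} (hG : X.GoodBoundaryExtends G)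
    [Finite ι] (hS : ∀ t, (S t).Finite) (hdisj : Pairwise (Disjoint on S))
    (hsep : Pairwise fun t t' => ∀ u ∈ S t, ∀ v ∈ S t', ¬adjSites u v)
    (hw : ∀ t, X.locAdm (S t) (w t)) (hwG : ∀ t, ∀ v ∈ innerBd (S t), w t v ∈ G) :
    ∃ x ∈ X.pts, ∀ t, ∀ v ∈ S t, x v = w t v := by
  obtain ⟨x, hx, hxw⟩ := hG _ _ (finite_iUnion hS) (locAdm_glue hdisj hsep hw)
    fun v hv => glue_mem_of_mem_innerBd hdisj hwG hv
  exact ⟨x, hx, fun t v hv => (hxw v (mem_iUnion.2 ⟨t, hv⟩)).trans (glue_eq hdisj hv)⟩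

end Glue

lemma blockRestrict_image_langSet_subset {n k p : ℕ} (hnp : n ≤ p) :
    blockRestrict hnp '' X.langSet (cube d (k * p)) ⊆ univ.pi fun _ => X.langSet (cube d n) := by
  rintro _ ⟨_, ⟨x, hx, rfl⟩, rfl⟩ t -
  exact ⟨_, add_mem_pts hx (tileOffset p t), rfl⟩

theorem langCard_cube_mul_le [Finite A] (m s : ℕ) :
    X.langCard (cube d (s * m)) ≤ X.langCard (cube d m) ^ s ^ d :=
  calc X.langCard (cube d (s * m))
      = (blockRestrict le_rfl '' X.langSet (cube d (s * m))).ncard :=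
        (ncard_image_of_injective _ blockRestrict_injective).symm
    _ ≤ (univ.pi fun _ => X.langSet (cube d m)).ncard :=
        ncard_le_ncard (blockRestrict_image_langSet_subset le_rfl)
          (Set.Finite.pi fun _ => finite_langSet (cube_finite d m))
    _ = X.langCard (cube d m) ^ s ^ d := Set.ncard_univ_pi_const_fin d s _

variable {G : Set A}

theorem GoodBoundaryExtends.exists_mem_pts_concat (hG : X.GoodBoundaryExtends G) {n k : ℕ}
    (hk : 1 ≤ k) (W : (Fin d → Fin k) → Site d → A) (hW : ∀ t, X.globAdm (cube d n) (W t))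
    (hWG : ∀ t, ∀ v ∈ innerBd (cube d n), W t v ∈ G) :
    ∃ x ∈ X.pts, ∀ t, ∀ v ∈ cube d n, x (v + tileOffset (n + 1) t) = W t v := by
  have : Nonempty (Fin d → Fin k) := ⟨fun _ => ⟨0, hk⟩⟩
  obtain ⟨x, hx, hxW⟩ := hG.exists_mem_pts_eq_on
    (w := fun t v => W t (-tileOffset (n + 1) t +ᵥ v))
    (fun _ => (cube_finite d n).vadd_set) (pairwise_disjoint_tiles n k)
    (pairwise_nonadjacent_tiles n k) (fun t => (hW t).locAdm.vadd _)
    (fun t v hv => hWG t _ (neg_vadd_mem_innerBd hv))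
  refine ⟨x, hx, fun t v hv => ?_⟩
  rw [add_comm, ← vadd_eq_add, hxW t _ (vadd_mem_vadd_set hv), neg_vadd_vadd]

theorem GoodBoundaryExtends.NGcount_pow_le_langCard [Finite A] (hG : X.GoodBoundaryExtends G)
    {n k : ℕ} (hk : 1 ≤ k) : NGcount X G n ^ k ^ d ≤ X.langCard (cube d (k * (n + 1))) := by
  set T := {w ∈ X.langSet (cube d n) |
    ∀ v : cube d n, (v : Site d) ∈ innerBd (cube d n) → w v ∈ G}
  have hsub : (univ.pi fun _ : Fin d → Fin k => T) ⊆
      blockRestrict n.le_succ '' X.langSet (cube d (k * (n + 1))) := by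
    intro F hF
    choose y hy hyF using fun t => (hF t trivial).1
    have hyG : ∀ t, ∀ v ∈ innerBd (cube d n), y t v ∈ G := fun t v hv => by
      have := (hF t trivial).2 ⟨v, hv.1⟩ hv
      rwa [← hyF t] at this
    obtain ⟨x, hx, hxy⟩ :=
      hG.exists_mem_pts_concat hk y (fun t => ⟨y t, hy t, fun _ _ => rfl⟩) hyG
    refine ⟨_, ⟨x, hx, rfl⟩, funext fun t => funext fun v => ?_⟩
    rw [← hyF t]
    exact hxy t v v.2
  calc NGcount X G n ^ k ^ d = (univ.pi fun _ : Fin d → Fin k => T).ncard :=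
        (Set.ncard_univ_pi_const_fin d k T).symm
    _ ≤ (blockRestrict n.le_succ '' X.langSet (cube d (k * (n + 1)))).ncard :=
        ncard_le_ncard hsub ((finite_langSet (cube_finite _ _)).image _)
    _ ≤ X.langCard (cube d (k * (n + 1))) := ncard_image_le (finite_langSet (cube_finite _ _))

theorem GoodBoundaryExtends.log_NGcount_div_le_entropy [Finite A]
    (hG : X.GoodBoundaryExtends G) (n : ℕ) :
    Real.log (NGcount X G n) / ((n : ℝ) + 1) ^ d ≤ X.entropy := by
  refine le_ciInf fun m => ?_
  have h : NGcount X G n ^ (m : ℕ) ^ d ≤ X.langCard (cube d m) ^ (n + 1) ^ d :=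
    (hG.NGcount_pow_le_langCard m.2).trans (mul_comm (m : ℕ) (n + 1) ▸ langCard_cube_mul_le _ _)
  simpa using Real.log_div_le_log_div_of_pow_le (by positivity) (by positivity) h

end NNSFT

theorem concatenation_bound_general {d : ℕ} {A : Type} [Fintype A] (X : NNSFT d A)
    (G : Set A)
    (hG : ∀ (S : Set (Site d)) (w : Site d → A), S.Finite → X.locAdm S w →
      (∀ v ∈ innerBd S, w v ∈ G) → X.globAdm S w)
    (n k : ℕ) (hk : 1 ≤ k) :
    (∀ W : (Fin d → Fin k) → Site d → A,
      (∀ t, X.globAdm (cube d n) (W t)) →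
      (∀ t, ∀ v ∈ innerBd (cube d n), W t v ∈ G) →
      ∃ x ∈ X.pts, ∀ (t : Fin d → Fin k), ∀ v ∈ cube d n,
        x (fun i => v i + (t i : ℤ) * ((n : ℤ) + 1)) = W t v) ∧
    X.langCard (cube d (k * (n + 1))) ≥ NGcount X G n ^ k ^ d ∧
    X.entropy ≥ Real.log (NGcount X G n) / ((n : ℝ) + 1) ^ d := by
  have hG : X.GoodBoundaryExtends G := hG
  exact ⟨hG.exists_mem_pts_concat hk, hG.NGcount_pow_le_langCard hk,
    hG.log_NGcount_div_le_entropy n⟩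

theorem concatenation_bound {d : ℕ} {A : Type} [Fintype A] (X : NNSFT d A)
    (G : Set A)
    (hG : ∀ (S : Set (Site d)) (w : Site d → A), S.Finite → X.locAdm S w →
      (∀ v ∈ innerBd S, w v ∈ G) → X.globAdm S w)
    (n k : ℕ) (hn : 1 ≤ n) (hk : 1 ≤ k) :
    (∀ W : (Fin d → Fin k) → Site d → A,
      (∀ t, X.globAdm (cube d n) (W t)) →
      (∀ t, ∀ v ∈ innerBd (cube d n), W t v ∈ G) →
      ∃ x ∈ X.pts, ∀ (t : Fin d → Fin k), ∀ v ∈ cube d n,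
        x (fun i => v i + (t i : ℤ) * ((n : ℤ) + 1)) = W t v) ∧
    X.langCard (cube d (k * (n + 1))) ≥ NGcount X G n ^ k ^ d ∧
    X.entropy ≥ Real.log (NGcount X G n) / ((n : ℝ) + 1) ^ d :=
  concatenation_bound_general X G hG n k hk
end
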